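/- Let w ∈ L_n and α ∈ B_n^+. Then α ∈ F_n(w) if and only if μ ≼ α for some μ ∈ F_n^min(w); equivalently, F_n(w) = ⋃_{μ ∈ F_n^min(w)} μ·B_n^+. -/

import Mathlib

/-!
Common setup: the positive braid monoid `B_n^+` on `n` strands, presented by the
Artin generators `σ_1, …, σ_{n-1}` (1-based indexing) with the braid relations;
lex-representatives, forbidden prefixes, admissible functions, etc.
-/

namespace BraidPaper

/-- Words in the Artin generators: the free monoid on `n - 1` letters. -/
abbrev Word (n : ℕ) := FreeMonoid (Fin (n - 1))

/-- The generator `σ_i` (`1 ≤ i ≤ n - 1`, 1-based) as a one-letter word;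
the empty word for out-of-range indices. -/
def sigma (n : ℕ) (i : ℕ) : Word n :=
  if h : 1 ≤ i ∧ i ≤ n - 1 then FreeMonoid.of (⟨i - 1, by omega⟩ : Fin (n - 1)) else 1

/-- The braid relations. -/
inductive BraidRel (n : ℕ) : Word n → Word n → Prop
  | comm : ∀ i j : ℕ, 1 ≤ i → i ≤ n - 1 → 1 ≤ j → j ≤ n - 1 → (i + 2 ≤ j ∨ j + 2 ≤ i) →
      BraidRel n (sigma n i * sigma n j) (sigma n j * sigma n i)
  | braid : ∀ i : ℕ, 1 ≤ i → i + 1 ≤ n - 1 →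
      BraidRel n (sigma n i * sigma n (i + 1) * sigma n i)
        (sigma n (i + 1) * sigma n i * sigma n (i + 1))

/-- The congruence generated by the braid relations. -/
def braidCon (n : ℕ) : Con (Word n) := conGen (BraidRel n)

/-- The positive braid monoid `B_n^+`. -/
abbrev PB (n : ℕ) := (braidCon n).Quotient

/-- The canonical projection `b : A_n^* → B_n^+`. -/
def pr (n : ℕ) : Word n →* PB n := (braidCon n).mk'

/-- The length homomorphism on words (with values in `Multiplicative ℕ`). -/
def lenHom (n : ℕ) : Word n →* Multiplicative ℕ :=
  FreeMonoid.lift fun _ => Multiplicative.ofAdd 1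

lemma lenHom_sigma (n t : ℕ) (h1 : 1 ≤ t) (h2 : t ≤ n - 1) :
    lenHom n (sigma n t) = Multiplicative.ofAdd 1 := by
  rw [sigma, dif_pos ⟨h1, h2⟩]
  exact FreeMonoid.lift_eval_of _ _

lemma braidCon_le_ker (n : ℕ) : braidCon n ≤ Con.ker (lenHom n) := by
  refine Con.conGen_le.2 ?_
  intro x y h
  rw [Con.ker_rel]
  cases h with
  | comm i j hi hi' hj hj' hij =>
      rw [map_mul, map_mul, mul_comm]
  | braid i hi hi' =>
      rw [map_mul, map_mul, map_mul, map_mul,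
        lenHom_sigma n i hi (by omega), lenHom_sigma n (i + 1) (by omega) hi']

/-- The (well-defined) length of a positive braid. -/
def len (n : ℕ) (x : PB n) : ℕ :=
  Multiplicative.toAdd (Con.lift _ (lenHom n) (braidCon_le_ker n) x)

/-- The length of a word. -/
def wlen {n : ℕ} (w : Word n) : ℕ := (FreeMonoid.toList w).length

/-- Strict lexicographic order on words, induced by `σ_1 < σ_2 < ⋯ < σ_{n-1}`. -/
def lexLt {n : ℕ} (u v : Word n) : Prop :=
  List.Lex (· < ·) (FreeMonoid.toList u) (FreeMonoid.toList v)

/-- `L_n`: the set of lex-representatives, i.e. words that are `≤_lex`-minimal among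
all words representing the same element of `B_n^+` (all of which have equal length). -/
def Ln (n : ℕ) : Set (Word n) :=
  {w | ∀ v : Word n, pr n v = pr n w → ¬ lexLt v w}

open Classical in
/-- `ω(β)`: the lex-representative of a positive braid `β`. -/
noncomputable def omegaRep (n : ℕ) (β : PB n) : Word n :=
  if h : ∃ w : Word n, pr n w = β ∧ w ∈ Ln n then h.choose else 1

/-- `F_n(w)`: the set of forbidden prefixes after `w`. -/
def Fset (n : ℕ) (w : Word n) : Set (PB n) :=
  {α | w * omegaRep n α ∉ Ln n}

/-- Left-divisibility `a ≼ b` in `B_n^+`. -/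
def ldvd (n : ℕ) (a b : PB n) : Prop := ∃ c : PB n, a * c = b

/-- The set of `≼`-minimal elements of a subset of `B_n^+`. -/
def minimals (n : ℕ) (S : Set (PB n)) : Set (PB n) :=
  {a | a ∈ S ∧ ∀ b ∈ S, ldvd n b a → b = a}

/-- `F_n^min(w)`: the set of minimal forbidden prefixes after `w`. -/
def Fmin (n : ℕ) (w : Word n) : Set (PB n) := minimals n (Fset n w)

/-- `d` is a least common right-multiple of the set `S`. -/
def IsLcm (n : ℕ) (S : Set (PB n)) (d : PB n) : Prop :=
  (∀ a ∈ S, ldvd n a d) ∧ ∀ e : PB n, (∀ a ∈ S, ldvd n a e) → ldvd n d e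

/-- The descending product `σ_a σ_{a-1} ⋯ σ_b` (empty if `b > a`). -/
def prodDesc (n a b : ℕ) : Word n :=
  (((List.range' b (a + 1 - b)).reverse).map (sigma n)).prod

/-- The ascending product `σ_a σ_{a+1} ⋯ σ_b` (empty if `a > b`). -/
def prodAsc (n a b : ℕ) : Word n :=
  ((List.range' a (b + 1 - a)).map (sigma n)).prod

/-- Admissible functions `f : {1,…,n-1} → {-1,0,1,…,n-1}`. -/
def Admissible (n : ℕ) (f : ℕ → ℤ) : Prop :=
  (∀ i : ℕ, 1 ≤ i → i ≤ n - 1 → -1 ≤ f i ∧ f i ≤ (i : ℤ)) ∧ f 1 ≠ -1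

/-- The set `F_f ⊆ B_n^+` associated to an admissible function `f`: the elements
`σ_i σ_{i-1} ⋯ σ_{f(i)}` for `i` with `1 ≤ f(i) ≤ i`, together with the elements
`σ_{i-1} σ_i` for `i` with `f(i) = -1`. -/
def Ff (n : ℕ) (f : ℕ → ℤ) : Set (PB n) :=
  {x | ∃ i : ℕ, 1 ≤ i ∧ i ≤ n - 1 ∧ 1 ≤ f i ∧ f i ≤ (i : ℤ) ∧
        x = pr n (prodDesc n i (f i).toNat)} ∪
  {x | ∃ i : ℕ, 1 ≤ i ∧ i ≤ n - 1 ∧ f i = -1 ∧ x = pr n (sigma n (i - 1) * sigma n i)}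

/-- `F_n^min(w, m)`: the set of `≼`-minimal elements of `{σ_1,…,σ_m} ∪ F_n^min(w)`. -/
def FminM (n : ℕ) (w : Word n) (m : ℕ) : Set (PB n) :=
  minimals n ({x | ∃ i : ℕ, 1 ≤ i ∧ i ≤ m ∧ x = pr n (sigma n i)} ∪ Fmin n w)

/-- `x_{n,j}` (for `j : ℤ`): the number of elements of `B_n^+` of length `j`
(`0` for negative `j`). -/
noncomputable def xcount (n : ℕ) (j : ℤ) : ℕ :=
  Nat.card {x : PB n // (len n x : ℤ) = j}

/-- `x_{n,k}(w,m)`: the number of words in `L_n` of length `k` of the form `w·w'`,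
where `w'` does not begin with any of `σ_1, …, σ_m`. -/
noncomputable def xwm (n k : ℕ) (w : Word n) (m : ℕ) : ℕ :=
  Nat.card {v : Word n // wlen v = k ∧ v ∈ Ln n ∧
    ∃ w' : Word n, v = w * w' ∧
      ∀ i : ℕ, 1 ≤ i → i ≤ m → ¬ ∃ u : Word n, w' = sigma n i * u}


/-!
`F_n(w)` is closed upward under `≼` because `B_n^+` is left cancellative. If `v` represents
`w·ω(μ)` and is lexicographically smaller, the first difference cannot come after the prefix `w`:
cancelling `w` would exhibit a representative of `μ` smaller than `ω(μ)`. So the difference lies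
inside `w`, and `v` followed by any word for `δ` beats `w·ω(μδ)` as well. Conversely a forbidden
divisor of `α` of minimal length is a minimal forbidden prefix.

Left cancellativity is Garside's lemma: `a u ≡ b v` forces `u ≡ complement a b · z` and
`v ≡ complement b a · z` for some `z`. It is proved by induction on the length of `u` and then on
the chain of braid moves, by a case analysis on how the three letters involved commute.
-/

open Relation

section BraidWords

variable {n : ℕ}

-- The letter `a : Fin (n - 1)` is the generator `σ_{a+1}`.
def Far (a b : Fin (n - 1)) : Prop := (a : ℕ) + 2 ≤ b ∨ (b : ℕ) + 2 ≤ a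

def Adj (a b : Fin (n - 1)) : Prop := (a : ℕ) = b + 1 ∨ (b : ℕ) = a + 1

instance : DecidableRel (Far (n := n)) := fun _ _ => by unfold Far; infer_instance

variable {a b c x : Fin (n - 1)}

lemma Far.symm (h : Far a b) : Far b a := Or.symm h

lemma Adj.symm (h : Adj a b) : Adj b a := Or.symm h

lemma Far.ne (h : Far a b) : a ≠ b := by
  rintro rfl; unfold Far at h; omega

lemma Adj.ne (h : Adj a b) : a ≠ b := by
  rintro rfl; unfold Adj at h; omega

lemma Far.not_adj (h : Far a b) : ¬ Adj a b := by
  unfold Far Adj at *; omega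

lemma Adj.not_far (h : Adj a b) : ¬ Far a b := fun h' => h'.not_adj h

lemma Adj.not_adj_of_adj (hab : Adj a b) (hbc : Adj b c) : ¬ Adj a c := by
  unfold Adj at *; omega

lemma eq_or_far_or_adj (a b : Fin (n - 1)) : a = b ∨ Far a b ∨ Adj a b := by
  rcases eq_or_ne a b with h | h
  · exact Or.inl h
  · have := Fin.val_ne_of_ne h
    unfold Far Adj; omega

inductive BraidStep : List (Fin (n - 1)) → List (Fin (n - 1)) → Prop
  | swap {a b : Fin (n - 1)} (h : Far a b) (s : List (Fin (n - 1))) :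
      BraidStep (a :: b :: s) (b :: a :: s)
  | braid {a b : Fin (n - 1)} (h : Adj a b) (s : List (Fin (n - 1))) :
      BraidStep (a :: b :: a :: s) (b :: a :: b :: s)
  | cons (x : Fin (n - 1)) {u v : List (Fin (n - 1))} :
      BraidStep u v → BraidStep (x :: u) (x :: v)

abbrev BraidEqv : List (Fin (n - 1)) → List (Fin (n - 1)) → Prop := ReflTransGen BraidStep

local infix:50 " ≈ᵇ " => BraidEqv

variable {u v w : List (Fin (n - 1))}

lemma BraidStep.symm (h : BraidStep u v) : BraidStep v u := by
  induction h with
  | swap h s => exact .swap h.symm s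
  | braid h s => exact .braid h.symm s
  | cons x _ ih => exact .cons x ih

lemma BraidStep.length_eq (h : BraidStep u v) : u.length = v.length := by
  induction h <;> simp_all

lemma BraidStep.append_right (h : BraidStep u v) (w : List (Fin (n - 1))) :
    BraidStep (u ++ w) (v ++ w) := by
  induction h with
  | swap h s => exact .swap h _
  | braid h s => exact .braid h _
  | cons x _ ih => exact .cons x ih

lemma BraidStep.append_left (h : BraidStep u v) : ∀ p : List (Fin (n - 1)),
    BraidStep (p ++ u) (p ++ v)
  | [] => h
  | x :: p => .cons x (h.append_left p)

namespace BraidEqv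

lemma refl (u : List (Fin (n - 1))) : u ≈ᵇ u := ReflTransGen.refl

lemma trans (h₁ : u ≈ᵇ v) (h₂ : v ≈ᵇ w) : u ≈ᵇ w := ReflTransGen.trans h₁ h₂

instance : Trans (BraidEqv (n := n)) BraidEqv BraidEqv := ⟨trans⟩

lemma symm (h : u ≈ᵇ v) : v ≈ᵇ u := by
  induction h with
  | refl => exact refl _
  | tail _ hs ih => exact (ReflTransGen.single hs.symm).trans ih

lemma length_eq (h : u ≈ᵇ v) : u.length = v.length := by
  induction h with
  | refl => rfl
  | tail _ hs ih => exact ih.trans hs.length_eq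

lemma append_right (h : u ≈ᵇ v) (w : List (Fin (n - 1))) : u ++ w ≈ᵇ v ++ w :=
  ReflTransGen.lift (· ++ w) (fun _ _ hs => hs.append_right w) _ _ h

lemma append_left (h : u ≈ᵇ v) (p : List (Fin (n - 1))) : p ++ u ≈ᵇ p ++ v :=
  ReflTransGen.lift (p ++ ·) (fun _ _ hs => hs.append_left p) _ _ h

lemma cons (h : u ≈ᵇ v) (x : Fin (n - 1)) : x :: u ≈ᵇ x :: v := h.append_left [x]

lemma swap (h : Far a b) (s : List (Fin (n - 1))) : a :: b :: s ≈ᵇ b :: a :: s :=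
  .single (.swap h s)

lemma braid (h : Adj a b) (s : List (Fin (n - 1))) : a :: b :: a :: s ≈ᵇ b :: a :: b :: s :=
  .single (.braid h s)

lemma cons_append_of_far (h : ∀ y ∈ u, Far x y) (w : List (Fin (n - 1))) :
    x :: (u ++ w) ≈ᵇ u ++ x :: w := by
  induction u with
  | nil => exact refl _
  | cons y u ih =>
    rw [List.forall_mem_cons] at h
    exact (swap h.1 _).trans ((ih h.2).cons y)

end BraidEqv

lemma sigma_val_add_one (a : Fin (n - 1)) : sigma n (a + 1) = FreeMonoid.of a := by
  rw [sigma, dif_pos ⟨by omega, by omega⟩]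
  rfl

lemma braidCon_ofList_of_braidStep (h : BraidStep u v) :
    braidCon n (FreeMonoid.ofList u) (FreeMonoid.ofList v) := by
  induction h with
  | @swap a b h s =>
    have hrel := ConGen.Rel.of _ _ (BraidRel.comm (n := n) (a + 1) (b + 1) (by omega)
      (by omega) (by omega) (by omega) (by unfold Far at h; omega))
    simp only [sigma_val_add_one] at hrel
    simpa [mul_assoc] using (braidCon n).mul hrel ((braidCon n).refl (FreeMonoid.ofList s))
  | @braid a b h s =>
    suffices hrel : braidCon n (FreeMonoid.of a * FreeMonoid.of b * FreeMonoid.of a)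
        (FreeMonoid.of b * FreeMonoid.of a * FreeMonoid.of b) by
      simpa [mul_assoc] using (braidCon n).mul hrel ((braidCon n).refl (FreeMonoid.ofList s))
    rcases h with h | h
    · have hrel := ConGen.Rel.of _ _ (BraidRel.braid (n := n) (b + 1) (by omega) (by omega))
      rw [show (b : ℕ) + 1 + 1 = a + 1 by omega, sigma_val_add_one, sigma_val_add_one] at hrel
      exact (braidCon n).symm hrel
    · have hrel := ConGen.Rel.of _ _ (BraidRel.braid (n := n) (a + 1) (by omega) (by omega))
      rwa [show (a : ℕ) + 1 + 1 = b + 1 by omega, sigma_val_add_one, sigma_val_add_one] at hrel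
  | cons x _ ih => simpa using (braidCon n).mul ((braidCon n).refl (FreeMonoid.of x)) ih

lemma braidEqv_toList_of_braidRel {x y : Word n} (h : BraidRel n x y) :
    x.toList ≈ᵇ y.toList := by
  cases h with
  | comm i j hi hi' hj hj' hij =>
    obtain ⟨a, rfl⟩ : ∃ a : Fin (n - 1), i = a + 1 := ⟨⟨i - 1, by omega⟩, by simp; omega⟩
    obtain ⟨b, rfl⟩ : ∃ b : Fin (n - 1), j = b + 1 := ⟨⟨j - 1, by omega⟩, by simp; omega⟩
    simp only [sigma_val_add_one, FreeMonoid.toList_mul, FreeMonoid.toList_of]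
    exact BraidEqv.swap (by unfold Far; omega) []
  | braid i hi hi' =>
    obtain ⟨a, rfl⟩ : ∃ a : Fin (n - 1), i = a + 1 := ⟨⟨i - 1, by omega⟩, by simp; omega⟩
    obtain ⟨b, hb⟩ : ∃ b : Fin (n - 1), (a : ℕ) + 1 + 1 = b + 1 := ⟨⟨a + 1, by omega⟩, rfl⟩
    simp only [hb, sigma_val_add_one, FreeMonoid.toList_mul, FreeMonoid.toList_of]
    exact BraidEqv.braid (by unfold Adj; omega) []

lemma braidCon_ofList_of_braidEqv (h : u ≈ᵇ v) :
    braidCon n (FreeMonoid.ofList u) (FreeMonoid.ofList v) := by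
  induction h with
  | refl => exact (braidCon n).refl _
  | tail _ hs ih => exact ih.trans (braidCon_ofList_of_braidStep hs)

def braidEqvCon (n : ℕ) : Con (Word n) where
  r x y := x.toList ≈ᵇ y.toList
  iseqv := ⟨fun _ => .refl _, .symm, .trans⟩
  mul' {_ _ _ _} h₁ h₂ := by
    simp only [FreeMonoid.toList_mul]
    exact (h₁.append_right _).trans (h₂.append_left _)

lemma braidCon_eq_braidEqvCon : braidCon n = braidEqvCon n := by
  refine le_antisymm (Con.conGen_le.2 fun _ _ h => braidEqv_toList_of_braidRel h) ?_
  intro x y (h : x.toList ≈ᵇ y.toList)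
  simpa using braidCon_ofList_of_braidEqv h

theorem pr_eq_pr_iff {x y : Word n} : pr n x = pr n y ↔ x.toList ≈ᵇ y.toList := by
  change (x : (braidCon n).Quotient) = y ↔ _
  rw [Con.eq, braidCon_eq_braidEqvCon]
  rfl

/-- `a · complement a b = b · complement b a` is the least common right multiple of `a` and `b`. -/
def complement (a b : Fin (n - 1)) : List (Fin (n - 1)) :=
  if a = b then [] else if Far a b then [b] else [b, a]

variable {s : List (Fin (n - 1))}

lemma forall_mem_complement {p : Fin (n - 1) → Prop} (ha : p a) (hb : p b) :
    ∀ y ∈ complement a b, p y := by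
  unfold complement; split_ifs <;> simp [ha, hb]

/-- `a u = b v` is a right multiple of `lcm(a, b) = a · complement a b`. -/
def ThroughLcm (a b : Fin (n - 1)) (u v : List (Fin (n - 1))) : Prop :=
  ∃ z, u ≈ᵇ complement a b ++ z ∧ v ≈ᵇ complement b a ++ z

lemma throughLcm_self_iff : ThroughLcm a a u v ↔ u ≈ᵇ v := by
  simp only [ThroughLcm, complement, ite_true, List.nil_append]
  exact ⟨fun ⟨_, hu, hv⟩ => hu.trans hv.symm, fun h => ⟨v, h, .refl v⟩⟩

lemma throughLcm_far_iff (h : Far a b) :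
    ThroughLcm a b u v ↔ ∃ z, u ≈ᵇ b :: z ∧ v ≈ᵇ a :: z := by
  simp [ThroughLcm, complement, h, h.symm, h.ne, h.ne.symm]

lemma throughLcm_adj_iff (h : Adj a b) :
    ThroughLcm a b u v ↔ ∃ z, u ≈ᵇ b :: a :: z ∧ v ≈ᵇ a :: b :: z := by
  simp [ThroughLcm, complement, h.ne, h.ne.symm, h.not_far, h.symm.not_far]

def ThroughLcmBelow (n L : ℕ) : Prop :=
  ∀ (a b : Fin (n - 1)) (u v : List (Fin (n - 1))), u.length < L →
    a :: u ≈ᵇ b :: v → ThroughLcm a b u v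

namespace ThroughLcmBelow

variable {L : ℕ}

lemma cancel (H : ThroughLcmBelow n L) (hu : u.length < L) (h : a :: u ≈ᵇ a :: v) : u ≈ᵇ v :=
  throughLcm_self_iff.1 (H a a u v hu h)

lemma far (H : ThroughLcmBelow n L) (hab : Far a b) (hu : u.length < L)
    (h : a :: u ≈ᵇ b :: v) : ∃ z, u ≈ᵇ b :: z ∧ v ≈ᵇ a :: z :=
  (throughLcm_far_iff hab).1 (H a b u v hu h)

lemma adj (H : ThroughLcmBelow n L) (hab : Adj a b) (hu : u.length < L)
    (h : a :: u ≈ᵇ b :: v) : ∃ z, u ≈ᵇ b :: a :: z ∧ v ≈ᵇ a :: b :: z :=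
  (throughLcm_adj_iff hab).1 (H a b u v hu h)

lemma swap_head (H : ThroughLcmBelow n L) (hax : Far a x) (hs : s.length < L)
    (h : ThroughLcm x b (a :: s) v) : ThroughLcm a b (x :: s) v := by
  rcases eq_or_far_or_adj x b with rfl | hxb | hxb
  · exact (throughLcm_far_iff hax).2 ⟨s, .refl _, (throughLcm_self_iff.1 h).symm⟩
  · obtain ⟨z₁, hs₁, hv₁⟩ := (throughLcm_far_iff hxb).1 h
    obtain ⟨z₂, hs₂, hz₂⟩ := H a b s z₁ hs hs₁
    -- `x` commutes with both letters of the complements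
    refine ⟨x :: z₂, ?_, ?_⟩
    · calc x :: s ≈ᵇ x :: (complement a b ++ z₂) := hs₂.cons x
        _ ≈ᵇ complement a b ++ x :: z₂ :=
          .cons_append_of_far (forall_mem_complement hax.symm hxb) z₂
    · calc v ≈ᵇ x :: z₁ := hv₁
        _ ≈ᵇ x :: (complement b a ++ z₂) := hz₂.cons x
        _ ≈ᵇ complement b a ++ x :: z₂ :=
          .cons_append_of_far (forall_mem_complement hxb hax.symm) z₂
  · obtain ⟨z₁, hs₁, hv₁⟩ := (throughLcm_adj_iff hxb).1 h
    have hz₁ : z₁.length < L := by have := hs₁.length_eq; simp at this; omega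
    rcases eq_or_far_or_adj a b with rfl | hab | hab
    · exact absurd hxb hax.symm.not_adj
    · obtain ⟨z₂, hs₂, hz₂⟩ := H.far hab hs hs₁
      obtain ⟨z₃, hz₁, hz₂⟩ := H.far hax.symm hz₁ hz₂
      refine (throughLcm_far_iff hab).2 ⟨x :: b :: z₃, ?_, ?_⟩
      · calc x :: s ≈ᵇ x :: b :: z₂ := hs₂.cons x
          _ ≈ᵇ x :: b :: x :: z₃ := hz₂.append_left [x, b]
          _ ≈ᵇ b :: x :: b :: z₃ := .braid hxb z₃
      · calc v ≈ᵇ x :: b :: z₁ := hv₁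
          _ ≈ᵇ x :: b :: a :: z₃ := hz₁.append_left [x, b]
          _ ≈ᵇ x :: a :: b :: z₃ := (BraidEqv.swap hab.symm z₃).cons x
          _ ≈ᵇ a :: x :: b :: z₃ := .swap hax.symm _
    · obtain ⟨z₂, hs₂, hz₂⟩ := H.adj hab hs hs₁
      have hz₂l : z₂.length < L := by have := hs₂.length_eq; simp at this; omega
      obtain ⟨z₃, hz₁, hz₃⟩ := H.far hax.symm hz₁ hz₂
      obtain ⟨z₄, hz₂, hz₃⟩ := H.adj hxb.symm hz₂l hz₃
      refine (throughLcm_adj_iff hab).2 ⟨x :: b :: a :: z₄, ?_, ?_⟩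
      · calc x :: s ≈ᵇ x :: b :: a :: z₂ := hs₂.cons x
          _ ≈ᵇ x :: b :: a :: x :: b :: z₄ := hz₂.append_left [x, b, a]
          _ ≈ᵇ x :: b :: x :: a :: b :: z₄ := (BraidEqv.swap hax _).append_left [x, b]
          _ ≈ᵇ b :: x :: b :: a :: b :: z₄ := .braid hxb _
          _ ≈ᵇ b :: x :: a :: b :: a :: z₄ := (BraidEqv.braid hab.symm _).append_left [b, x]
          _ ≈ᵇ b :: a :: x :: b :: a :: z₄ := (BraidEqv.swap hax.symm _).cons b
      · calc v ≈ᵇ x :: b :: z₁ := hv₁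
          _ ≈ᵇ x :: b :: a :: z₃ := hz₁.append_left [x, b]
          _ ≈ᵇ x :: b :: a :: b :: x :: z₄ := hz₃.append_left [x, b, a]
          _ ≈ᵇ x :: a :: b :: a :: x :: z₄ := (BraidEqv.braid hab.symm _).cons x
          _ ≈ᵇ a :: x :: b :: a :: x :: z₄ := .swap hax.symm _
          _ ≈ᵇ a :: x :: b :: x :: a :: z₄ := (BraidEqv.swap hax _).append_left [a, x, b]
          _ ≈ᵇ a :: b :: x :: b :: a :: z₄ := (BraidEqv.braid hxb _).cons a

lemma braid_head (H : ThroughLcmBelow n L) (hax : Adj a x) (hs : (x :: s).length < L)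
    (h : ThroughLcm x b (a :: x :: s) v) : ThroughLcm a b (x :: a :: s) v := by
  have hs' : s.length < L := by simp at hs; omega
  rcases eq_or_far_or_adj x b with rfl | hxb | hxb
  · exact (throughLcm_adj_iff hax).2 ⟨s, .refl _, (throughLcm_self_iff.1 h).symm⟩
  · obtain ⟨z₁, hs₁, hv₁⟩ := (throughLcm_far_iff hxb).1 h
    rcases eq_or_far_or_adj a b with rfl | hab | hab
    · exact absurd hax.symm hxb.not_adj
    · obtain ⟨z₂, hs₂, hz₁⟩ := H.far hab hs hs₁
      obtain ⟨z₃, hs₃, hz₂⟩ := H.far hxb hs' hs₂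
      refine (throughLcm_far_iff hab).2 ⟨x :: a :: z₃, ?_, ?_⟩
      · calc x :: a :: s ≈ᵇ x :: a :: b :: z₃ := hs₃.append_left [x, a]
          _ ≈ᵇ b :: x :: a :: z₃ :=
            (BraidEqv.cons_append_of_far (u := [x, a]) (by simp [hxb.symm, hab.symm]) z₃).symm
      · calc v ≈ᵇ x :: z₁ := hv₁
          _ ≈ᵇ x :: a :: z₂ := hz₁.cons x
          _ ≈ᵇ x :: a :: x :: z₃ := hz₂.append_left [x, a]
          _ ≈ᵇ a :: x :: a :: z₃ := .braid hax.symm z₃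
    · obtain ⟨z₂, hs₂, hz₁⟩ := H.adj hab hs hs₁
      obtain ⟨z₃, hs₃, hz₃⟩ := H.far hxb hs' hs₂
      have hz₂l : z₂.length < L := by have := hs₂.length_eq; simp at this; omega
      obtain ⟨z₄, hz₂, hz₃⟩ := H.adj hax hz₂l hz₃
      refine (throughLcm_adj_iff hab).2 ⟨x :: a :: b :: z₄, ?_, ?_⟩
      · calc x :: a :: s ≈ᵇ x :: a :: b :: z₃ := hs₃.append_left [x, a]
          _ ≈ᵇ x :: a :: b :: a :: x :: z₄ := hz₃.append_left [x, a, b]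
          _ ≈ᵇ x :: b :: a :: b :: x :: z₄ := (BraidEqv.braid hab _).cons x
          _ ≈ᵇ b :: x :: a :: b :: x :: z₄ := .swap hxb _
          _ ≈ᵇ b :: x :: a :: x :: b :: z₄ := (BraidEqv.swap hxb.symm _).append_left [b, x, a]
          _ ≈ᵇ b :: a :: x :: a :: b :: z₄ := (BraidEqv.braid hax.symm _).cons b
      · calc v ≈ᵇ x :: z₁ := hv₁
          _ ≈ᵇ x :: a :: b :: z₂ := hz₁.cons x
          _ ≈ᵇ x :: a :: b :: x :: a :: z₄ := hz₂.append_left [x, a, b]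
          _ ≈ᵇ x :: a :: x :: b :: a :: z₄ := (BraidEqv.swap hxb.symm _).append_left [x, a]
          _ ≈ᵇ a :: x :: a :: b :: a :: z₄ := .braid hax.symm _
          _ ≈ᵇ a :: x :: b :: a :: b :: z₄ := (BraidEqv.braid hab _).append_left [a, x]
          _ ≈ᵇ a :: b :: x :: a :: b :: z₄ := (BraidEqv.swap hxb _).cons a
  · obtain ⟨z₁, hs₁, hv₁⟩ := (throughLcm_adj_iff hxb).1 h
    have hz₁l : z₁.length < L := by have := hs₁.length_eq; simp at this; omega
    rcases eq_or_far_or_adj a b with rfl | hab | hab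
    · have hs₁ : s ≈ᵇ z₁ := H.cancel hs' (H.cancel hs hs₁)
      refine throughLcm_self_iff.2 (calc x :: a :: s ≈ᵇ x :: a :: z₁ := hs₁.append_left [x, a]
        _ ≈ᵇ v := hv₁.symm)
    · obtain ⟨z₂, hs₂, hz₂⟩ := H.far hab hs hs₁
      obtain ⟨z₄, hs₄, hz₂₄⟩ := H.adj hxb hs' hs₂
      obtain ⟨z₃, hz₁, hz₂₃⟩ := H.adj hax.symm hz₁l hz₂
      have hz₄l : z₄.length + 1 < L := by have := hs₄.length_eq; simp at this; omega
      have hz₄₃ : b :: z₄ ≈ᵇ a :: z₃ := H.cancel hz₄l (hz₂₄.symm.trans hz₂₃)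
      obtain ⟨z₆, hz₄, hz₃⟩ := H.far hab.symm (by omega) hz₄₃
      refine (throughLcm_far_iff hab).2 ⟨x :: b :: a :: x :: z₆, ?_, ?_⟩
      · calc x :: a :: s ≈ᵇ x :: a :: b :: x :: z₄ := hs₄.append_left [x, a]
          _ ≈ᵇ x :: a :: b :: x :: a :: z₆ := hz₄.append_left [x, a, b, x]
          _ ≈ᵇ x :: b :: a :: x :: a :: z₆ := (BraidEqv.swap hab _).cons x
          _ ≈ᵇ x :: b :: x :: a :: x :: z₆ := (BraidEqv.braid hax _).append_left [x, b]
          _ ≈ᵇ b :: x :: b :: a :: x :: z₆ := .braid hxb _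
      · calc v ≈ᵇ x :: b :: z₁ := hv₁
          _ ≈ᵇ x :: b :: a :: x :: z₃ := hz₁.append_left [x, b]
          _ ≈ᵇ x :: b :: a :: x :: b :: z₆ := hz₃.append_left [x, b, a, x]
          _ ≈ᵇ x :: a :: b :: x :: b :: z₆ := (BraidEqv.swap hab.symm _).cons x
          _ ≈ᵇ x :: a :: x :: b :: x :: z₆ := (BraidEqv.braid hxb.symm _).append_left [x, a]
          _ ≈ᵇ a :: x :: a :: b :: x :: z₆ := .braid hax.symm _
          _ ≈ᵇ a :: x :: b :: a :: x :: z₆ := (BraidEqv.swap hab _).append_left [a, x]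
    · exact absurd hab (hax.not_adj_of_adj hxb)

end ThroughLcmBelow

theorem throughLcm_of_braidEqv (h : a :: u ≈ᵇ b :: v) : ThroughLcm a b u v := by
  induction hL : u.length using Nat.strong_induction_on generalizing a b u v with
  | _ L IH =>
  have H : ThroughLcmBelow n L := fun a b u v hu h => IH _ hu h rfl
  suffices ∀ w, w ≈ᵇ b :: v → ∀ a u, w = a :: u → u.length = L → ThroughLcm a b u v from
    this _ h a u rfl hL
  intro w hw
  induction hw using ReflTransGen.head_induction_on with
  | refl => rintro a u ⟨⟩ -; exact throughLcm_self_iff.2 (.refl _)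
  | head hstep _ ih =>
    rintro a u rfl rfl
    cases hstep with
    | swap hax s => exact H.swap_head hax (by simp) (ih _ _ rfl (by simp))
    | braid hax s => exact H.braid_head hax (by simp) (ih _ _ rfl (by simp))
    | cons _ hstep =>
      obtain ⟨z, hu, hv⟩ := ih _ _ rfl hstep.length_eq.symm
      exact ⟨z, (ReflTransGen.single hstep).trans hu, hv⟩

theorem braidEqv_append_left_iff (p : List (Fin (n - 1))) : p ++ u ≈ᵇ p ++ v ↔ u ≈ᵇ v := by
  refine ⟨fun h => ?_, (·.append_left p)⟩
  induction p with
  | nil => exact h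
  | cons x p ih => exact ih (throughLcm_self_iff.1 (throughLcm_of_braidEqv h))

end BraidWords

theorem _root_.List.append_lt_append_iff_of_length_eq {α : Type*} [LT α] {l₁ l₂ m₁ m₂ : List α}
    (h : l₁.length = l₂.length) : l₁ ++ m₁ < l₂ ++ m₂ ↔ l₁ < l₂ ∨ l₁ = l₂ ∧ m₁ < m₂ := by
  induction l₁ generalizing l₂ with
  | nil => simp_all [List.length_eq_zero_iff.1 h.symm]
  | cons a l₁ ih =>
    obtain ⟨b, l₂, rfl⟩ := List.exists_cons_of_length_eq_add_one h.symm
    simp only [List.cons_append, List.cons_lt_cons_iff, List.cons.injEq,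
      ih (Nat.succ_injective h)]
    tauto

section LexRepresentatives

variable {n : ℕ}

lemma pr_surjective : Function.Surjective (pr n) := Con.mk'_surjective

lemma len_pr (g : Word n) : len n (pr n g) = g.toList.length := by
  simp [len, pr, lenHom, FreeMonoid.lift_apply]

lemma len_mul (x y : PB n) : len n (x * y) = len n x + len n y := by
  simp [len]

lemma eq_one_of_len_eq_zero {x : PB n} (h : len n x = 0) : x = 1 := by
  obtain ⟨g, rfl⟩ := pr_surjective x
  rw [len_pr, List.length_eq_zero_iff] at h
  rw [← FreeMonoid.ofList_toList g, h]
  exact map_one _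

lemma ldvd_trans {a b c : PB n} (hab : ldvd n a b) (hbc : ldvd n b c) : ldvd n a c := by
  obtain ⟨d, rfl⟩ := hab
  obtain ⟨e, rfl⟩ := hbc
  exact ⟨d * e, (mul_assoc a d e).symm⟩

theorem exists_mem_minimals_ldvd {S : Set (PB n)} {α : PB n} (hα : α ∈ S) :
    ∃ μ ∈ minimals n S, ldvd n μ α := by
  obtain ⟨μ, ⟨hμS, hμα⟩, hmin⟩ :=
    (measure (len n)).wf.has_min {γ | γ ∈ S ∧ ldvd n γ α} ⟨α, hα, 1, mul_one α⟩
  refine ⟨μ, ⟨hμS, fun β hβS ⟨γ, hγ⟩ => ?_⟩, hμα⟩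
  have hle : ¬ len n β < len n μ := hmin β ⟨hβS, ldvd_trans ⟨γ, hγ⟩ hμα⟩
  rw [← hγ, len_mul] at hle
  rw [← hγ, eq_one_of_len_eq_zero (x := γ) (by omega), mul_one]

lemma exists_mem_Ln_pr_eq (β : PB n) : ∃ w, pr n w = β ∧ w ∈ Ln n := by
  obtain ⟨g, rfl⟩ := pr_surjective β
  set S := {l : List (Fin (n - 1)) | pr n (FreeMonoid.ofList l) = pr n g}
  have hS : S.Finite := (List.finite_length_eq _ g.toList.length).subset fun l hl =>
    by simpa using (pr_eq_pr_iff.1 hl).length_eq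
  obtain ⟨m, hmS, hmin⟩ := S.exists_min_image id hS ⟨g.toList, by simp [S]⟩
  refine ⟨FreeMonoid.ofList m, hmS, fun v hv hlt => ?_⟩
  exact (hmin v.toList (by simpa [S] using hv.trans hmS)).not_gt hlt

lemma omegaRep_spec (β : PB n) : pr n (omegaRep n β) = β ∧ omegaRep n β ∈ Ln n := by
  rw [omegaRep, dif_pos (exists_mem_Ln_pr_eq β)]
  exact (exists_mem_Ln_pr_eq β).choose_spec

theorem mem_Fset_of_ldvd {w : Word n} {μ α : PB n} (hμ : μ ∈ Fset n w) (hμα : ldvd n μ α) :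
    α ∈ Fset n w := by
  obtain ⟨δ, rfl⟩ := hμα
  obtain ⟨g, rfl⟩ := pr_surjective δ
  obtain ⟨v, hv, hlt⟩ :
      ∃ v, pr n v = pr n (w * omegaRep n μ) ∧ lexLt v (w * omegaRep n μ) := by
    simpa [Fset, Ln] using hμ
  set W := w.toList
  obtain ⟨V₁, V₂, hV, hV₁⟩ : ∃ V₁ V₂, v.toList = V₁ ++ V₂ ∧ V₁.length = W.length :=
    ⟨_, _, (List.take_append_drop W.length _).symm, by simp [(pr_eq_pr_iff.1 hv).length_eq, W]⟩
  change v.toList < W ++ (omegaRep n μ).toList at hlt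
  rw [hV, List.append_lt_append_iff_of_length_eq hV₁] at hlt
  rcases hlt with hlt | ⟨hV₁W, hlt⟩
  · -- `v` already beats `w` before the end of `w`, so `v * g` beats `w * ω(μ g)`
    refine fun hα => hα (v * g) ?_ ?_
    · simp [hv, (omegaRep_spec _).1, mul_assoc]
    · change (v * g).toList < W ++ _
      rw [FreeMonoid.toList_mul, hV, List.append_assoc,
        List.append_lt_append_iff_of_length_eq hV₁]
      exact Or.inl hlt
  · -- otherwise, by left cancellation, `ω(μ)` would not be lex-minimal
    refine ((omegaRep_spec μ).2 (FreeMonoid.ofList V₂) ?_ (by simpa [lexLt] using hlt)).elim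
    rw [pr_eq_pr_iff, FreeMonoid.toList_ofList, ← braidEqv_append_left_iff V₁, ← hV, hV₁W]
    simpa using pr_eq_pr_iff.1 hv

end LexRepresentatives

theorem statement_19_general (n : ℕ) (w : Word n) (α : PB n) :
    α ∈ Fset n w ↔ ∃ μ ∈ Fmin n w, ldvd n μ α :=
  ⟨exists_mem_minimals_ldvd, fun ⟨_, hμ, hμα⟩ => mem_Fset_of_ldvd hμ.1 hμα⟩

/-- `α ∈ F_n(w)` iff `μ ≼ α` for some `μ ∈ F_n^min(w)`;
equivalently, `F_n(w) = ⋃_{μ ∈ F_n^min(w)} μ·B_n^+`. -/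
theorem statement_19 (n : ℕ) (hn : 2 ≤ n) (w : Word n) (hw : w ∈ Ln n) (α : PB n) :
    α ∈ Fset n w ↔ ∃ μ ∈ Fmin n w, ldvd n μ α :=
  statement_19_general n w α

end BraidPaper
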